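/- arXiv:2208.05146 — 3 statements merged into one kernel-verified Lean document; each statement's English description precedes it below -/
import Mathlib

section
/- For all integers k, l with 0 ≤ l ≤ k, the following identity holds in ℂ: Σ_{h=0}^{l} Σ_{j=0}^{k−l} i^{h+j} · C(l,h) · C(k−l,j) · E(h+j,h) = i^{k−1} · E(k,l) + δ_{k,l} · i + δ_{l,0}, where C(a,b) is the binomial coefficient, δ is the Kronecker delta, and i = √−1. -/
open Finset

/-- The Entringer numbers: `E(0,0) = 1`, `E(n,0) = 0` for `n ≥ 1`, and
`E(n,j) = E(n,j-1) + E(n-1,n-j)` for `n ≥ 1`, `1 ≤ j ≤ n`. -/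
def entringer : ℕ → ℕ → ℕ
  | 0, 0 => 1
  | 0, _ + 1 => 0
  | _ + 1, 0 => 0
  | n + 1, j + 1 => entringer (n + 1) j + entringer n (n - j)

/-!
Put `f(h, j) = i^(h+j) E(h+j, h)` and `S(a, b) = ∑_{h ≤ a} ∑_{j ≤ b} C(a,h) C(b,j) f(h, j)`.
The Entringer recurrence reads `f(h+1, j) = f(h, j+1) + i f(j, h)`, so Pascal's rule applied to
`C(a+1, h)` turns it into `S(a+1, b) = S(a, b+1) + i S(b, a)`. The claimed closed form obeys the
same recurrence (the two Kronecker terms are exchanged, using `i² = -1`) and `S(0, b) = 1`, so an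
induction on `(a + b, a)` in lexicographic order proves it for all `a, b`.
-/

open Complex

section BinomialSum

variable {R : Type*} [CommSemiring R]

theorem sum_range_succ_choose_mul (a : ℕ) (g : ℕ → R) :
    ∑ h ∈ range (a + 2), ((a + 1).choose h : R) * g h
      = ∑ h ∈ range (a + 1), (a.choose h : R) * (g h + g (h + 1)) := by
  have shift : ∑ h ∈ range (a + 1), (a.choose h : R) * g h
      = ∑ h ∈ range (a + 1), (a.choose (h + 1) : R) * g (h + 1) + g 0 := by
    simpa [sum_range_succ _ (a + 1)] using sum_range_succ' (fun h => (a.choose h : R) * g h) (a + 1)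
  simp only [sum_range_succ' _ (a + 1), Nat.choose_succ_succ, Nat.cast_add, add_mul,
    sum_add_distrib, Nat.choose_zero_right, Nat.cast_one, one_mul, mul_add]
  rw [shift]
  ring

def binomialSum₂ (f : ℕ → ℕ → R) (a b : ℕ) : R :=
  ∑ h ∈ range (a + 1), ∑ j ∈ range (b + 1), (a.choose h : R) * (b.choose j : R) * f h j

theorem binomialSum₂_add (f g : ℕ → ℕ → R) (a b : ℕ) :
    binomialSum₂ (f + g) a b = binomialSum₂ f a b + binomialSum₂ g a b := by
  simp only [binomialSum₂, Pi.add_apply, mul_add, sum_add_distrib]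

theorem binomialSum₂_const_mul (c : R) (f : ℕ → ℕ → R) (a b : ℕ) :
    binomialSum₂ (fun h j => c * f h j) a b = c * binomialSum₂ f a b := by
  simp only [binomialSum₂, mul_sum]
  exact sum_congr rfl fun _ _ => sum_congr rfl fun _ _ => by ring

theorem binomialSum₂_swap (f : ℕ → ℕ → R) (a b : ℕ) :
    binomialSum₂ f b a = binomialSum₂ (fun h j => f j h) a b := by
  rw [binomialSum₂, sum_comm]
  exact sum_congr rfl fun _ _ => sum_congr rfl fun _ _ => by ring

theorem binomialSum₂_succ_left (f : ℕ → ℕ → R) (a b : ℕ) :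
    binomialSum₂ f (a + 1) b = binomialSum₂ f a b + binomialSum₂ (fun h j => f (h + 1) j) a b := by
  simp only [binomialSum₂, mul_assoc, ← mul_sum]
  rw [sum_range_succ_choose_mul, ← sum_add_distrib]
  simp only [mul_sum, ← sum_add_distrib]
  exact sum_congr rfl fun _ _ => sum_congr rfl fun _ _ => by ring

theorem binomialSum₂_succ_right (f : ℕ → ℕ → R) (a b : ℕ) :
    binomialSum₂ f a (b + 1) = binomialSum₂ f a b + binomialSum₂ (fun h j => f h (j + 1)) a b := by
  rw [binomialSum₂_swap f (b + 1) a, binomialSum₂_succ_left, binomialSum₂_swap _ a b,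
    binomialSum₂_swap _ a b]

end BinomialSum

theorem entringer_zero_right (n : ℕ) : entringer n 0 = if n = 0 then 1 else 0 := by
  cases n <;> simp [entringer]

theorem entringer_add_succ_succ (a b : ℕ) :
    entringer (a + b + 1) (a + 1) = entringer (a + b + 1) a + entringer (a + b) b := by
  simp only [entringer, Nat.add_sub_cancel_left]

def entringerTerm (h j : ℕ) : ℂ := I ^ (h + j) * entringer (h + j) h

theorem entringerTerm_succ_left (h j : ℕ) :
    entringerTerm (h + 1) j = entringerTerm h (j + 1) + I * entringerTerm j h := by
  simp only [entringerTerm, Nat.add_right_comm h 1 j, ← Nat.add_assoc, entringer_add_succ_succ,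
    Nat.add_comm j h, Nat.cast_add, pow_succ]
  ring

theorem binomialSum₂_entringerTerm_succ_left (a b : ℕ) :
    binomialSum₂ entringerTerm (a + 1) b
      = binomialSum₂ entringerTerm a (b + 1) + I * binomialSum₂ entringerTerm b a := by
  have shift : (fun h j => entringerTerm (h + 1) j)
      = (fun h j => entringerTerm h (j + 1)) + fun h j => I * entringerTerm j h := by
    ext h j
    exact entringerTerm_succ_left h j
  rw [binomialSum₂_succ_left, shift, binomialSum₂_add, binomialSum₂_const_mul,
    ← binomialSum₂_swap entringerTerm a b, ← add_assoc, ← binomialSum₂_succ_right]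

theorem binomialSum₂_entringerTerm_zero_left (b : ℕ) : binomialSum₂ entringerTerm 0 b = 1 := by
  rw [binomialSum₂, sum_range_one, sum_eq_single 0]
  · simp [entringerTerm, entringer]
  · intro j _ hj
    simp [entringerTerm, entringer_zero_right, hj]
  · simp

theorem mul_zpow_natCast_sub_one₀ {G₀ : Type*} [CommGroupWithZero G₀] {a : G₀} (ha : a ≠ 0)
    (n : ℕ) : a * a ^ ((n : ℤ) - 1) = a ^ n := by
  rw [zpow_natCast_sub_one₀ ha, mul_div_cancel₀ _ ha]

theorem binomialSum₂_entringerTerm : ∀ a b : ℕ,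
    binomialSum₂ entringerTerm a b = I ^ (((a + b : ℕ) : ℤ) - 1) * entringer (a + b) a
      + (if b = 0 then I else 0) + (if a = 0 then 1 else 0)
  | 0, b => by
    rw [binomialSum₂_entringerTerm_zero_left]
    rcases b with _ | b
    · simp [entringer, zpow_neg, inv_I]
    · simp [entringer]
  | a + 1, b => by
    rw [binomialSum₂_entringerTerm_succ_left, binomialSum₂_entringerTerm a (b + 1),
      binomialSum₂_entringerTerm b a]
    simp only [← Nat.add_assoc, Nat.add_right_comm a 1 b, Nat.add_comm b a, entringer_add_succ_succ,
      Nat.add_eq_zero_iff, one_ne_zero, and_false, if_false, Nat.cast_succ, add_sub_cancel_right,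
      zpow_natCast, Nat.cast_add (R := ℂ)]
    rw [← mul_boole _ I, ← mul_boole _ I]
    linear_combination (entringer (a + b) b : ℂ) * mul_zpow_natCast_sub_one₀ I_ne_zero (a + b)
      + (if a = 0 then 1 else 0 : ℂ) * I_mul_I
termination_by a b => (a + b, a)
decreasing_by
  all_goals simp_wf
  all_goals rw [Prod.lex_def]
  all_goals omega

/-- the Entringer-number generating identity in ℂ:
`Σ_{h=0}^{l} Σ_{j=0}^{k-l} i^{h+j} C(l,h) C(k-l,j) E(h+j,h)
  = i^{k-1} E(k,l) + δ_{k,l} i + δ_{l,0}`. -/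
theorem stmt8 (k l : ℕ) (hlk : l ≤ k) :
    ∑ h ∈ Finset.range (l + 1), ∑ j ∈ Finset.range (k - l + 1),
        Complex.I ^ (h + j) * (l.choose h : ℂ) * ((k - l).choose j : ℂ)
          * (entringer (h + j) h : ℂ)
      = Complex.I ^ ((k : ℤ) - 1) * (entringer k l : ℂ)
          + (if k = l then Complex.I else 0) + (if l = 0 then 1 else 0) := by
  have hsum : ∑ h ∈ Finset.range (l + 1), ∑ j ∈ Finset.range (k - l + 1),
        Complex.I ^ (h + j) * (l.choose h : ℂ) * ((k - l).choose j : ℂ)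
          * (entringer (h + j) h : ℂ) = binomialSum₂ entringerTerm l (k - l) :=
    sum_congr rfl fun _ _ => sum_congr rfl fun _ _ => by rw [entringerTerm]; ring
  have hkl : k - l = 0 ↔ k = l := by omega
  rw [hsum, binomialSum₂_entringerTerm, Nat.add_sub_cancel' hlk]
  simp only [hkl]
end

section
/- For every tuple (k1,…,kr) of positive integers and every real number x, the function g satisfies g_{(k1,…,kr)}(−x) = (−1)^{k1+⋯+kr} · g_{(k1,…,kr)}(x). -/
open Filter Finset MeasureTheory intervalIntegral

/-- Auxiliary recursion (on the *reversed* index): `gaux (k_r :: ⋯ :: k_1 :: [])` is the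
function `x ↦ 𝒜(k_1,…,k_r; tanh(x/2 + πi/4))`, defined by
`gaux [] = 1`, `gaux (1 :: ks) x = -i ∫₀ˣ gaux ks u du`, and for `k_r ≥ 2`
`gaux (k :: ks) x = -i ∫₀ˣ gaux ((k-1) :: ks) u / cosh u du`. -/
noncomputable def gaux : List ℕ → ℝ → ℂ
  | [] => fun _ => 1
  | 0 :: ks => gaux ks
  | 1 :: ks => fun x => -Complex.I * ∫ u in (0 : ℝ)..x, gaux ks u
  | (k + 2) :: ks => fun x =>
      -Complex.I * ∫ u in (0 : ℝ)..x, gaux ((k + 1) :: ks) u / (Real.cosh u : ℂ)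
termination_by ks => ks.sum + ks.length
decreasing_by
  all_goals simp [List.sum_cons]
  omega

/-- The function `g_{(k_1,…,k_r)} : ℝ → ℂ`, i.e. `x ↦ 𝒜(k_1,…,k_r; tanh(x/2 + πi/4))`. -/
noncomputable def gfun (ks : List ℕ) : ℝ → ℂ := gaux ks.reverse

theorem gaux_cont : ∀ ks : List ℕ, Continuous (gaux ks)
  | [] => by rw [gaux]; exact continuous_const
  | 0 :: ks => by rw [gaux]; exact gaux_cont ks
  | 1 :: ks => by
      rw [gaux]
      exact continuous_const.mul
        (intervalIntegral.continuous_primitive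
          (fun a b => (gaux_cont ks).intervalIntegrable a b) 0)
  | (k + 2) :: ks => by
      rw [gaux]
      refine continuous_const.mul
        (intervalIntegral.continuous_primitive (fun a b => ?_) 0)
      exact (((gaux_cont ((k + 1) :: ks)).div
        (Complex.continuous_ofReal.comp Real.continuous_cosh)
        (fun u => show ((Real.cosh u : ℝ) : ℂ) ≠ 0 from
          Complex.ofReal_ne_zero.mpr (Real.cosh_pos u).ne')).intervalIntegrable a b)
termination_by ks => ks.sum + ks.length
decreasing_by
  all_goals simp [List.sum_cons]
  omega

theorem gaux_neg : ∀ (ks : List ℕ) (x : ℝ),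
    gaux ks (-x) = (-1 : ℂ) ^ ks.sum * gaux ks x
  | [], x => by rw [gaux]; simp
  | 0 :: ks, x => by rw [gaux]; simpa using gaux_neg ks x
  | 1 :: ks, x => by
      rw [gaux]
      have h1 : (∫ u in (0:ℝ)..(-x), gaux ks u) = -∫ u in (0:ℝ)..x, gaux ks (-u) := by
        rw [intervalIntegral.integral_comp_neg (f := gaux ks), neg_zero,
          intervalIntegral.integral_symm]
      have h2 : (∫ u in (0:ℝ)..x, gaux ks (-u))
          = (-1 : ℂ) ^ ks.sum * ∫ u in (0:ℝ)..x, gaux ks u := by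
        rw [← intervalIntegral.integral_const_mul]
        exact intervalIntegral.integral_congr fun u _ => gaux_neg ks u
      simp only [h1, h2, List.sum_cons, pow_succ, pow_one]
      ring
  | (k + 2) :: ks, x => by
      rw [gaux]
      set f : ℝ → ℂ := fun u => gaux ((k + 1) :: ks) u / (Real.cosh u : ℂ) with hf
      have h1 : (∫ u in (0:ℝ)..(-x), f u) = -∫ u in (0:ℝ)..x, f (-u) := by
        rw [intervalIntegral.integral_comp_neg (f := f), neg_zero,
          intervalIntegral.integral_symm]
      have h2 : (∫ u in (0:ℝ)..x, f (-u))
          = (-1 : ℂ) ^ ((k + 1) :: ks).sum * ∫ u in (0:ℝ)..x, f u := by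
        rw [← intervalIntegral.integral_const_mul]
        refine intervalIntegral.integral_congr fun u _ => ?_
        simp only [hf, Real.cosh_neg, gaux_neg ((k + 1) :: ks) u]
        ring
      simp only [h1, h2, List.sum_cons]
      rw [show (k + 2) + ks.sum = ((k + 1) + ks.sum) + 1 by omega, pow_succ]
      ring
termination_by ks => ks.sum + ks.length
decreasing_by
  all_goals simp [List.sum_cons]
  omega

/-- the parity relation
`g_{(k_1,…,k_r)}(-x) = (-1)^{k_1+⋯+k_r} g_{(k_1,…,k_r)}(x)`. -/
theorem stmt11 (ks : List ℕ) (hk : ∀ k ∈ ks, 1 ≤ k) (x : ℝ) :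
    gfun ks (-x) = (-1 : ℂ) ^ ks.sum * gfun ks x := by
  have := gaux_neg ks.reverse x
  rwa [List.sum_reverse] at this
end

section
/- For every tuple (k1,…,kr) of positive integers, there exists an entire function Λ : ℂ → ℂ such that Λ(s) = λ(k1,…,kr; s) for all s with Re(s) > 0, and Λ(−n) = (−1)^n · ℰ_n^{(k1,…,kr)} for every integer n ≥ 0, where ℰ_n^{(k1,…,kr)} denotes the n-th derivative at 0 of the function t ↦ g_{(k1,…,kr)}(t)/cosh(t) (equivalently, the coefficients in its Taylor expansion Σ_{n≥0} ℰ_n^{(k1,…,kr)} t^n/n!, which are the multi-poly-Euler numbers). -/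
open Filter Finset MeasureTheory intervalIntegral

/-- The Arakawa–Kaneko type zeta function of level four:
`λ(k_1,…,k_r; s) = (1/Γ(s)) ∫₀^∞ t^{s-1} g_{(k_1,…,k_r)}(t)/cosh t dt`. -/
noncomputable def lambdaFun (ks : List ℕ) (s : ℂ) : ℂ :=
  (1 / Complex.Gamma s) *
    ∫ t in Set.Ioi (0 : ℝ), (t : ℂ) ^ (s - 1) * gfun ks t / (Real.cosh t : ℂ)

open Topology Asymptotics Set
open scoped ContDiff

/-!
Put `f = g_k / cosh`. Let `𝒜` be the class of functions generated from `1` by linear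
combinations, multiplication by `sech` and `tanh`, and primitives `∫₀ˣ`; its members grow at most
like `e^{t/2}` on `[0, ∞)`. Since `sech' = -tanh · sech` and `tanh' = sech²`, the derivatives of
`f = sech · g_k` stay in `𝒜` with a factor `sech t ≤ 2 e^{-t}` in every term, so all `f⁽ᴺ⁾`
decay like `e^{-t/2}`. Integrating by parts `N` times gives
`Γ(s)⁻¹ ∫₀^∞ t^{s-1} f(t) dt = (-1)^N Γ(s+N)⁻¹ ∫₀^∞ t^{s+N-1} f⁽ᴺ⁾(t) dt`,
whose right side is holomorphic for `Re s > -N`. At `s = -n`, `N = n + 1`, it equals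
`(-1)^{n+1} ∫₀^∞ f⁽ⁿ⁺¹⁾ = (-1)^n f⁽ⁿ⁾(0)`.
-/

lemma Real.hasDerivAt_tanh (t : ℝ) : HasDerivAt Real.tanh (Real.cosh t ^ 2)⁻¹ t := by
  have h := (Real.hasDerivAt_sinh t).div (Real.hasDerivAt_cosh t) (Real.cosh_pos t).ne'
  rw [← sq, ← sq, Real.cosh_sq_sub_sinh_sq, one_div] at h
  exact h.congr_of_eventuallyEq (.of_forall Real.tanh_eq_sinh_div_cosh)

lemma norm_inv_cosh_le_one (t : ℝ) : ‖((Real.cosh t : ℂ))⁻¹‖ ≤ 1 := by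
  rw [norm_inv, Complex.norm_real, Real.norm_of_nonneg (Real.cosh_pos t).le]
  exact inv_le_one_of_one_le₀ (Real.one_le_cosh t)

lemma norm_inv_cosh_le_exp_neg (t : ℝ) : ‖((Real.cosh t : ℂ))⁻¹‖ ≤ 2 * Real.exp (-t) := by
  rw [norm_inv, Complex.norm_real, Real.norm_of_nonneg (Real.cosh_pos t).le, Real.exp_neg,
    ← div_eq_mul_inv, inv_le_comm₀ (Real.cosh_pos t) (by positivity), inv_div, Real.cosh_eq]
  linarith [Real.exp_pos (-t)]

lemma norm_tanh_le_one (t : ℝ) : ‖(Real.tanh t : ℂ)‖ ≤ 1 := by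
  rw [Complex.norm_real, Real.norm_eq_abs]
  exact (Real.abs_tanh_lt_one t).le

lemma isBigO_mul_of_norm_le_one {l : Filter ℝ} {φ g : ℝ → ℂ} {w : ℝ → ℝ}
    (hφ : ∀ t, ‖φ t‖ ≤ 1) (hg : g =O[l] w) : (fun t => φ t * g t) =O[l] w := by
  have hφ' : φ =O[l] fun _ => (1 : ℝ) :=
    .of_bound' (.of_forall fun t => (hφ t).trans_eq norm_one.symm)
  simpa only [one_mul] using hφ'.mul hg

section Mellin

variable {g g' : ℝ → ℂ} {a : ℝ}

lemma Continuous.isBigO_rpow_neg_zero (hg : Continuous g) :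
    g =O[𝓝[>] 0] fun t : ℝ => t ^ (-(0 : ℝ)) := by
  simpa using (hg.tendsto 0).mono_left nhdsWithin_le_nhds |>.isBigO_one ℝ

lemma mellinConvergent_of_isBigO_exp (hg : Continuous g) (ha : 0 < a)
    (hdecay : g =O[atTop] fun t => Real.exp (-a * t)) {s : ℂ} (hs : 0 < s.re) :
    MellinConvergent g s :=
  mellinConvergent_of_isBigO_rpow_exp ha (hg.locallyIntegrable.locallyIntegrableOn _) hdecay
    hg.isBigO_rpow_neg_zero hs

lemma differentiableAt_mellin_of_isBigO_exp (hg : Continuous g) (ha : 0 < a)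
    (hdecay : g =O[atTop] fun t => Real.exp (-a * t)) {s : ℂ} (hs : 0 < s.re) :
    DifferentiableAt ℂ (mellin g) s :=
  mellin_differentiableAt_of_isBigO_rpow_exp ha (hg.locallyIntegrable.locallyIntegrableOn _)
    hdecay hg.isBigO_rpow_neg_zero hs

lemma tendsto_cpow_mul_atTop_zero_of_isBigO_exp (ha : 0 < a)
    (hdecay : g =O[atTop] fun t => Real.exp (-a * t)) (s : ℂ) :
    Tendsto (fun t : ℝ => (t : ℂ) ^ s * g t) atTop (𝓝 0) := by
  have hpow : (fun t : ℝ => (t : ℂ) ^ s) =O[atTop] fun t => t ^ s.re :=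
    IsBigO.of_bound 1 <| (eventually_gt_atTop 0).mono fun t ht => by
      rw [Complex.norm_cpow_eq_rpow_re_of_pos ht, Real.norm_of_nonneg (by positivity), one_mul]
  exact (hpow.mul hdecay).trans_tendsto (tendsto_rpow_mul_exp_neg_mul_atTop_nhds_zero _ _ ha)

lemma mellin_deriv_add_one (hg : Continuous g) (hg' : Continuous g')
    (hderiv : ∀ t ∈ Ioi (0 : ℝ), HasDerivAt g (g' t) t) (ha : 0 < a)
    (hdecay : g =O[atTop] fun t => Real.exp (-a * t))
    (hdecay' : g' =O[atTop] fun t => Real.exp (-a * t)) {s : ℂ} (hs : 0 < s.re) :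
    mellin g' (s + 1) = -s * mellin g s := by
  have hs0 : s ≠ 0 := by rintro rfl; simp at hs
  have hpow : ∀ t ∈ Ioi (0 : ℝ), HasDerivAt (fun t : ℝ => (t : ℂ) ^ s) (s * (t : ℂ) ^ (s - 1)) t :=
    fun t ht => hasDerivAt_ofReal_cpow_const (ne_of_gt ht) hs0
  have hzero : Tendsto (fun t : ℝ => (t : ℂ) ^ s * g t) (𝓝[>] 0) (𝓝 0) := by
    have := (Complex.continuousAt_ofReal_cpow_const 0 s (Or.inl hs)).tendsto.mul (hg.tendsto 0)
    simpa [Complex.zero_cpow hs0] using this.mono_left nhdsWithin_le_nhds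
  have hint' : IntegrableOn (fun t : ℝ => (t : ℂ) ^ s * g' t) (Ioi 0) := by
    simpa [MellinConvergent] using
      mellinConvergent_of_isBigO_exp hg' ha hdecay' (s := s + 1)
        (by simp only [Complex.add_re, Complex.one_re]; linarith)
  have hint : IntegrableOn (fun t : ℝ => s * (t : ℂ) ^ (s - 1) * g t) (Ioi 0) := by
    simp_rw [mul_assoc]
    exact (mellinConvergent_of_isBigO_exp hg ha hdecay hs).const_mul s
  have := integral_Ioi_mul_deriv_eq_deriv_mul hpow hderiv hint' hint hzero
    (tendsto_cpow_mul_atTop_zero_of_isBigO_exp ha hdecay s)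
  simp only [mellin, add_sub_cancel_right, smul_eq_mul, this, zero_sub, sub_zero, mul_assoc,
    MeasureTheory.integral_const_mul, neg_mul]

lemma mellin_deriv_one (hg : Continuous g) (hg' : Continuous g')
    (hderiv : ∀ t ∈ Ioi (0 : ℝ), HasDerivAt g (g' t) t) (ha : 0 < a)
    (hdecay : g =O[atTop] fun t => Real.exp (-a * t))
    (hdecay' : g' =O[atTop] fun t => Real.exp (-a * t)) :
    mellin g' 1 = -g 0 := by
  have hint : IntegrableOn g' (Ioi 0) := by
    simpa [MellinConvergent] using mellinConvergent_of_isBigO_exp hg' ha hdecay' (s := 1) (by simp)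
  have hlim : Tendsto g atTop (𝓝 0) :=
    hdecay.trans_tendsto <|
      Real.tendsto_exp_atBot.comp (tendsto_id.const_mul_atTop_of_neg (neg_neg_of_pos ha))
  simpa [mellin] using
    integral_Ioi_of_hasDerivAt_of_tendsto hg.continuousWithinAt hderiv hint hlim

end Mellin

lemma exists_differentiable_of_forall_halfPlane (L : ℕ → ℂ → ℂ)
    (hdiff : ∀ (N : ℕ) s, -(N : ℝ) < s.re → DifferentiableAt ℂ (L N) s)
    (hsucc : ∀ (N : ℕ) s, -(N : ℝ) < s.re → L (N + 1) s = L N s) :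
    ∃ Λ : ℂ → ℂ, Differentiable ℂ Λ ∧ ∀ (N : ℕ) s, -(N : ℝ) < s.re → Λ s = L N s := by
  have hmono : ∀ N M : ℕ, ∀ s, N ≤ M → -(N : ℝ) < s.re → L M s = L N s := by
    intro N M s hNM hs
    induction M, hNM using Nat.le_induction with
    | base => rfl
    | succ M hNM ih =>
      rw [hsucc M s (lt_of_le_of_lt (by simpa using hNM) hs), ih]
  have hN : ∀ s : ℂ, -((⌈-s.re⌉₊ + 1 : ℕ) : ℝ) < s.re := fun s => by
    push_cast; linarith [Nat.le_ceil (-s.re)]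
  have heq : ∀ (N : ℕ) s, -(N : ℝ) < s.re → L (⌈-s.re⌉₊ + 1) s = L N s := fun N s hs => by
    rw [← hmono N (max N (⌈-s.re⌉₊ + 1)) s (le_max_left ..) hs,
      hmono _ _ s (le_max_right ..) (hN s)]
  refine ⟨fun s => L (⌈-s.re⌉₊ + 1) s, fun s => ?_, heq⟩
  have hloc : (fun z : ℂ => L (⌈-z.re⌉₊ + 1) z) =ᶠ[𝓝 s] L (⌈-s.re⌉₊ + 1) :=
    ((isOpen_lt continuous_const Complex.continuous_re).eventually_mem (hN s)).mono
      fun z hz => heq _ z hz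
  exact (hdiff _ s (hN s)).congr_of_eventuallyEq hloc

lemma ContDiff.hasDerivAt_iteratedDeriv {f : ℝ → ℂ} (hf : ContDiff ℝ ∞ f) (n : ℕ) (t : ℝ) :
    HasDerivAt (iteratedDeriv n f) (iteratedDeriv (n + 1) f t) t := by
  rw [iteratedDeriv_succ]
  exact ((hf.differentiable_iteratedDeriv n (mod_cast ENat.natCast_lt_top n)) t).hasDerivAt

section Continuation

variable {f : ℝ → ℂ} {a : ℝ}

/-- `N`-fold integration by parts in `mellin f s / Γ(s)`; valid for `-N < re s`. -/
noncomputable def shiftedMellin (f : ℝ → ℂ) (N : ℕ) (s : ℂ) : ℂ :=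
  (-1) ^ N * (Complex.Gamma (s + N))⁻¹ * mellin (iteratedDeriv N f) (s + N)

variable (hf : ContDiff ℝ ∞ f) (ha : 0 < a)
  (hdecay : ∀ n, iteratedDeriv n f =O[atTop] fun t => Real.exp (-a * t))
include hf ha hdecay

lemma shiftedMellin_succ (N : ℕ) {s : ℂ} (hs : -(N : ℝ) < s.re) :
    shiftedMellin f (N + 1) s = shiftedMellin f N s := by
  have hσ : 0 < (s + N).re := by
    simp only [Complex.add_re, Complex.natCast_re]; linarith
  have hσ0 : s + N ≠ 0 := by rintro h; simp [h] at hσ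
  have hstep := mellin_deriv_add_one (hf.continuous_iteratedDeriv N (mod_cast le_top))
    (hf.continuous_iteratedDeriv (N + 1) (mod_cast le_top))
    (fun t _ => hf.hasDerivAt_iteratedDeriv N t) ha (hdecay N) (hdecay (N + 1)) hσ
  rw [shiftedMellin, shiftedMellin, Nat.cast_succ, ← add_assoc, hstep,
    Complex.Gamma_add_one _ hσ0]
  field_simp
  ring

lemma differentiableAt_shiftedMellin {N : ℕ} {s : ℂ} (hs : -(N : ℝ) < s.re) :
    DifferentiableAt ℂ (shiftedMellin f N) s := by
  have hσ : 0 < (s + N).re := by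
    simp only [Complex.add_re, Complex.natCast_re]; linarith
  have hmellin := differentiableAt_mellin_of_isBigO_exp
    (hf.continuous_iteratedDeriv N (mod_cast le_top)) ha (hdecay N) hσ
  have hGamma : DifferentiableAt ℂ (fun s : ℂ => (Complex.Gamma (s + N))⁻¹) s :=
    (Complex.differentiable_one_div_Gamma _).comp s (differentiableAt_id.add_const _)
  have hshift : DifferentiableAt ℂ (fun s : ℂ => mellin (iteratedDeriv N f) (s + N)) s :=
    DifferentiableAt.comp (f := fun s : ℂ => s + N) s hmellin (differentiableAt_id.add_const _)
  exact (hGamma.const_mul _).mul hshift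

theorem exists_differentiable_eq_mellin_div_Gamma :
    ∃ Λ : ℂ → ℂ, Differentiable ℂ Λ ∧
      (∀ s : ℂ, 0 < s.re → Λ s = 1 / Complex.Gamma s * mellin f s) ∧
      ∀ n : ℕ, Λ (-n) = (-1) ^ n * iteratedDeriv n f 0 := by
  obtain ⟨Λ, hΛ, hΛ_eq⟩ := exists_differentiable_of_forall_halfPlane (shiftedMellin f)
    (fun _ _ hs => differentiableAt_shiftedMellin hf ha hdecay hs)
    (fun N _ hs => shiftedMellin_succ hf ha hdecay N hs)
  refine ⟨Λ, hΛ, fun s hs => ?_, fun n => ?_⟩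
  · rw [hΛ_eq 0 s (by simpa using hs)]
    simp [shiftedMellin]
  · have hone : -(n : ℂ) + ((n + 1 : ℕ) : ℂ) = 1 := by push_cast; ring
    rw [hΛ_eq (n + 1) _ (by simp), shiftedMellin, hone, Complex.Gamma_one, inv_one,
      mellin_deriv_one (hf.continuous_iteratedDeriv n (mod_cast le_top))
        (hf.continuous_iteratedDeriv (n + 1) (mod_cast le_top))
        (fun t _ => hf.hasDerivAt_iteratedDeriv n t) ha (hdecay n) (hdecay (n + 1))]
    ring

end Continuation

/-- Terms for the class `𝒜` above: as syntax, they admit a derivative defined by recursion. -/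
inductive HypTerm : Type
  | one : HypTerm
  | smul : ℂ → HypTerm → HypTerm
  | add : HypTerm → HypTerm → HypTerm
  | sech : HypTerm → HypTerm
  | tanh : HypTerm → HypTerm
  | primitive : HypTerm → HypTerm

namespace HypTerm

noncomputable def eval : HypTerm → ℝ → ℂ
  | one, _ => 1
  | smul c e, t => c * e.eval t
  | add e₁ e₂, t => e₁.eval t + e₂.eval t
  | sech e, t => (Real.cosh t : ℂ)⁻¹ * e.eval t
  | tanh e, t => (Real.tanh t : ℂ) * e.eval t
  | primitive e, x => ∫ u in (0 : ℝ)..x, e.eval u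

def derivative : HypTerm → HypTerm
  | one => smul 0 one
  | smul c e => smul c e.derivative
  | add e₁ e₂ => add e₁.derivative e₂.derivative
  | sech e => add (sech e.derivative) (smul (-1) (tanh (sech e)))
  | tanh e => add (tanh e.derivative) (sech (sech e))
  | primitive e => e

theorem hasDerivAt_eval (e : HypTerm) (t : ℝ) : HasDerivAt e.eval (e.derivative.eval t) t := by
  induction e generalizing t with
  | one => simpa [eval, derivative] using hasDerivAt_const t (1 : ℂ)
  | smul c e ih => exact (ih t).const_mul c
  | add e₁ e₂ ih₁ ih₂ => exact (ih₁ t).add (ih₂ t)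
  | sech e ih =>
    have hcosh : (Real.cosh t : ℂ) ≠ 0 := Complex.ofReal_ne_zero.2 (Real.cosh_pos t).ne'
    refine (((Real.hasDerivAt_cosh t).ofReal_comp.inv hcosh).mul (ih t)).congr_deriv ?_
    simp only [eval, derivative, Real.tanh_eq_sinh_div_cosh, Pi.inv_apply]
    push_cast
    field_simp
    ring
  | tanh e ih =>
    refine ((Real.hasDerivAt_tanh t).ofReal_comp.mul (ih t)).congr_deriv ?_
    simp only [eval, derivative]
    push_cast
    ring
  | primitive e ih =>
    have hcont : Continuous e.eval := continuous_iff_continuousAt.2 fun t => (ih t).continuousAt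
    exact (hcont.integral_hasStrictDerivAt 0 t).hasDerivAt

theorem iteratedDeriv_eval (e : HypTerm) (n : ℕ) :
    iteratedDeriv n e.eval = (derivative^[n] e).eval := by
  induction n with
  | zero => rfl
  | succ n ih =>
    rw [iteratedDeriv_succ, ih, Function.iterate_succ_apply']
    exact funext fun t => (hasDerivAt_eval _ t).deriv

theorem contDiff_eval (e : HypTerm) : ContDiff ℝ ∞ e.eval :=
  contDiff_of_differentiable_iteratedDeriv fun n _ => by
    rw [iteratedDeriv_eval]
    exact fun t => (hasDerivAt_eval _ t).differentiableAt

theorem isBigO_eval_exp_half (e : HypTerm) :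
    e.eval =O[𝓟 (Ici 0)] fun t => Real.exp (t / 2) := by
  induction e with
  | one =>
    refine IsBigO.of_bound 1 (eventually_principal.2 fun t (ht : 0 ≤ t) => ?_)
    simp only [eval, norm_one, one_mul, Real.norm_of_nonneg (Real.exp_pos _).le]
    exact Real.one_le_exp (by positivity)
  | smul c e ih => exact ih.const_mul_left c
  | add e₁ e₂ ih₁ ih₂ => exact ih₁.add ih₂
  | sech e ih => exact isBigO_mul_of_norm_le_one norm_inv_cosh_le_one ih
  | tanh e ih => exact isBigO_mul_of_norm_le_one norm_tanh_le_one ih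
  | primitive e ih =>
    obtain ⟨C, hC, hbound⟩ := isBigO_iff'.1 ih
    simp only [eventually_principal, Real.norm_of_nonneg (Real.exp_pos _).le] at hbound
    have hB : ∀ t, HasDerivAt (fun t => 2 * C * Real.exp (t / 2)) (C * Real.exp (t / 2)) t :=
      fun t => (((hasDerivAt_id t).div_const 2).exp.const_mul (2 * C)).congr_deriv
        (by simp only [id_eq, one_div]; ring)
    refine IsBigO.of_bound (2 * C) (eventually_principal.2 fun x (hx : 0 ≤ x) => ?_)
    rw [Real.norm_of_nonneg (Real.exp_pos _).le]
    refine image_norm_le_of_norm_deriv_right_le_deriv_boundary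
      (fun t _ => (hasDerivAt_eval (primitive e) t).continuousAt.continuousWithinAt)
      (fun t _ => (hasDerivAt_eval (primitive e) t).hasDerivWithinAt) ?_ hB
      (fun t ht => hbound t ht.1) ⟨hx, le_rfl⟩
    simp [eval, hC.le]

inductive HasSechFactor : HypTerm → Prop
  | sech (e : HypTerm) : HasSechFactor (sech e)
  | smul (c : ℂ) {e : HypTerm} : HasSechFactor e → HasSechFactor (smul c e)
  | add {e₁ e₂ : HypTerm} : HasSechFactor e₁ → HasSechFactor e₂ → HasSechFactor (add e₁ e₂)
  | tanh {e : HypTerm} : HasSechFactor e → HasSechFactor (tanh e)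

theorem HasSechFactor.derivative {e : HypTerm} (h : HasSechFactor e) :
    HasSechFactor e.derivative := by
  induction h with
  | sech e => exact .add (.sech _) (.smul _ (.tanh (.sech _)))
  | smul c _ ih => exact .smul c ih
  | add _ _ ih₁ ih₂ => exact .add ih₁ ih₂
  | tanh _ ih => exact .add (.tanh ih) (.sech _)

theorem HasSechFactor.iterate_derivative {e : HypTerm} (h : HasSechFactor e) (n : ℕ) :
    HasSechFactor (HypTerm.derivative^[n] e) := by
  induction n with
  | zero => exact h
  | succ n ih => rw [Function.iterate_succ_apply']; exact ih.derivative

theorem HasSechFactor.isBigO_eval {e : HypTerm} (h : HasSechFactor e) :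
    e.eval =O[atTop] fun t => Real.exp (-(1 / 2) * t) := by
  induction h with
  | sech e =>
    have hsech : (fun t => (Real.cosh t : ℂ)⁻¹) =O[atTop] fun t => Real.exp (-t) :=
      .of_bound 2 <| .of_forall fun t => by
        simpa [Real.norm_of_nonneg (Real.exp_pos _).le] using norm_inv_cosh_le_exp_neg t
    have hgrowth := (isBigO_eval_exp_half e).mono (le_principal_iff.2 (Ici_mem_atTop 0))
    refine (hsech.mul hgrowth).congr_right fun t => ?_
    rw [← Real.exp_add]
    ring_nf
  | smul c _ ih => exact ih.const_mul_left c
  | add _ _ ih₁ ih₂ => exact ih₁.add ih₂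
  | tanh _ ih => exact isBigO_mul_of_norm_le_one norm_tanh_le_one ih

end HypTerm

theorem exists_eval_eq_gaux (ks : List ℕ) : ∃ e : HypTerm, e.eval = gaux ks := by
  induction ks using gaux.induct with
  | case1 => exact ⟨.one, by funext; simp [HypTerm.eval, gaux]⟩
  | case2 ks ih => simpa [gaux] using ih
  | case3 ks ih =>
    obtain ⟨e, he⟩ := ih
    exact ⟨.smul (-Complex.I) (.primitive e), by funext x; simp [HypTerm.eval, gaux, he]⟩
  | case4 k ks ih =>
    obtain ⟨e, he⟩ := ih
    refine ⟨.smul (-Complex.I) (.primitive (.sech e)), ?_⟩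
    funext x
    simp [HypTerm.eval, gaux, he, inv_mul_eq_div]

theorem stmt17_general (ks : List ℕ) :
    ∃ Λ : ℂ → ℂ, Differentiable ℂ Λ ∧
      (∀ s : ℂ, 0 < s.re → Λ s = lambdaFun ks s) ∧
      (∀ n : ℕ, Λ (-(n : ℂ)) = (-1 : ℂ) ^ n *
        iteratedDeriv n (fun t : ℝ => gfun ks t / (Real.cosh t : ℂ)) 0) := by
  obtain ⟨e, he⟩ := exists_eval_eq_gaux ks.reverse
  have hf : (HypTerm.sech e).eval = fun t => gfun ks t / (Real.cosh t : ℂ) := by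
    funext t
    simp [HypTerm.eval, he, gfun, inv_mul_eq_div]
  have hdecay (n : ℕ) : iteratedDeriv n (HypTerm.sech e).eval =O[atTop]
      fun t => Real.exp (-(1 / 2) * t) := by
    rw [HypTerm.iteratedDeriv_eval]
    exact ((HypTerm.HasSechFactor.sech e).iterate_derivative n).isBigO_eval
  obtain ⟨Λ, hΛ, hpos, hneg⟩ := exists_differentiable_eq_mellin_div_Gamma
    (HypTerm.contDiff_eval _) (by norm_num) hdecay
  rw [hf] at hpos hneg
  refine ⟨Λ, hΛ, fun s hs => ?_, hneg⟩
  simp_rw [hpos s hs, lambdaFun, mellin, smul_eq_mul, mul_div_assoc]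

/-- `λ(k_1,…,k_r; s)` extends to an entire function `Λ` whose values at
non-positive integers are `Λ(-n) = (-1)^n ℰ_n^{(k_1,…,k_r)}`, where the multi-poly-Euler
number `ℰ_n^{(k_1,…,k_r)}` is the `n`-th derivative at `0` of `t ↦ g_{(k_1,…,k_r)}(t)/cosh t`. -/
theorem stmt17 (ks : List ℕ) (hk : ∀ k ∈ ks, 1 ≤ k) :
    ∃ Λ : ℂ → ℂ, Differentiable ℂ Λ ∧
      (∀ s : ℂ, 0 < s.re → Λ s = lambdaFun ks s) ∧
      (∀ n : ℕ, Λ (-(n : ℂ)) = (-1 : ℂ) ^ n *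
        iteratedDeriv n (fun t : ℝ => gfun ks t / (Real.cosh t : ℂ)) 0) :=
  stmt17_general ks
end
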